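/- arXiv:2306.10835 — 2 statements merged into one kernel-verified Lean document; each statement's English description precedes it below -/
import Mathlib

section
/- A set function f : 2^V → ℝ with f(∅) = 0 is submodular if and only if its Lovász extension f̂ : [0,1]^n → ℝ is convex. -/
/-- `prefixSet σ k = {σ(0), …, σ(k-1)}`, the image under `σ` of the first `k` indices. -/
def prefixSet {n : ℕ} (σ : Equiv.Perm (Fin n)) (k : ℕ) : Finset (Fin n) :=
  (Finset.univ.filter (fun j : Fin n => (j : ℕ) < k)).image σ

/-- The Lovász-extension sum `∑ i, x_{σ(i)} (f(S_i) − f(S_{i−1}))` for a permutation `σ`. -/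
def lovaszSum {n : ℕ} (f : Finset (Fin n) → ℝ) (x : Fin n → ℝ)
    (σ : Equiv.Perm (Fin n)) : ℝ :=
  ∑ i : Fin n, x (σ i) * (f (prefixSet σ ((i : ℕ) + 1)) - f (prefixSet σ (i : ℕ)))

/-- The Lovász extension: the Lovász-extension sum evaluated with a permutation sorting
the components of `x` in decreasing order (i.e., sorting `-x` increasingly). -/
noncomputable def lovasz {n : ℕ} (f : Finset (Fin n) → ℝ) (x : Fin n → ℝ) : ℝ :=
  lovaszSum f x (Tuple.sort (fun i => -x i))

/-- `f` is submodular: diminishing marginal returns. -/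
def Submodular {n : ℕ} (f : Finset (Fin n) → ℝ) : Prop :=
  ∀ A B : Finset (Fin n), A ⊆ B → ∀ i : Fin n, i ∉ B →
    f (insert i B) - f B ≤ f (insert i A) - f A

/-!
For a fixed ordering `σ`, `lovaszSum f · σ` is linear. If `f` is submodular, swapping two
adjacent entries of `σ` that are out of order with respect to `x` does not decrease
`lovaszSum f x σ`: the difference is `(x b - x a)` times a difference of marginal gains.
Bubble sort then shows that the decreasing order maximises `lovaszSum f x`, so `lovasz f` is a
pointwise maximum of linear functions, hence convex.

Conversely, on `a • 1_A + b • 1_C` with `A ⊆ C` and `a, b > 0` both `A` and `C` are level sets,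
hence prefixes of the sorting permutation, and the Lovász extension equals
`a (f A - f ∅) + b (f C - f ∅)`. The midpoint of `1_{A ∪ {i}}` and `1_B` is
`(1_A + 1_{B ∪ {i}}) / 2`, so convexity at this midpoint is the submodular inequality.
-/

open Finset

section SumPair

variable {ι M : Type*} [Fintype ι] [DecidableEq ι] [AddCommMonoid M]
  {F G : ι → M} {i j : ι}

lemma sum_eq_add_add_sum_compl_pair (hij : i ≠ j) :
    ∑ q, F q = F i + F j + ∑ q ∈ {i, j}ᶜ, F q := by
  rw [← sum_add_sum_compl {i, j}, sum_pair hij]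

lemma sum_compl_pair_congr (h : ∀ q, q ≠ i → q ≠ j → F q = G q) :
    ∑ q ∈ {i, j}ᶜ, F q = ∑ q ∈ {i, j}ᶜ, G q :=
  sum_congr rfl fun q hq => by
    simp only [mem_compl, mem_insert, mem_singleton, not_or] at hq
    exact h q hq.1 hq.2

lemma sum_le_sum_of_eq_off_pair [PartialOrder M] [IsOrderedAddMonoid M] (hij : i ≠ j)
    (h : ∀ q, q ≠ i → q ≠ j → F q = G q) (hle : F i + F j ≤ G i + G j) :
    ∑ q, F q ≤ ∑ q, G q := by
  rw [sum_eq_add_add_sum_compl_pair hij, sum_eq_add_add_sum_compl_pair hij,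
    sum_compl_pair_congr h]
  gcongr

lemma sum_lt_sum_of_eq_off_pair [PartialOrder M] [IsOrderedCancelAddMonoid M] (hij : i ≠ j)
    (h : ∀ q, q ≠ i → q ≠ j → F q = G q) (hlt : F i + F j < G i + G j) :
    ∑ q, F q < ∑ q, G q := by
  rw [sum_eq_add_add_sum_compl_pair hij, sum_eq_add_add_sum_compl_pair hij,
    sum_compl_pair_congr h]
  gcongr

end SumPair

section Prefix

variable {n : ℕ}

lemma mem_prefixSet {σ : Equiv.Perm (Fin n)} {k : ℕ} {a : Fin n} :
    a ∈ prefixSet σ k ↔ (σ.symm a : ℕ) < k := by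
  simp only [prefixSet, mem_image, mem_filter, mem_univ, true_and]
  exact ⟨by rintro ⟨p, hp, rfl⟩; simpa using hp, fun h => ⟨σ.symm a, h, σ.apply_symm_apply a⟩⟩

@[simp]
lemma prefixSet_zero (σ : Equiv.Perm (Fin n)) : prefixSet σ 0 = ∅ := by
  ext a; simp [mem_prefixSet]

lemma prefixSet_succ (σ : Equiv.Perm (Fin n)) (i : Fin n) :
    prefixSet σ (i + 1) = insert (σ i) (prefixSet σ i) := by
  ext a
  rw [mem_insert, mem_prefixSet, mem_prefixSet, Nat.lt_succ_iff_lt_or_eq, or_comm,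
    ← Fin.ext_iff, Equiv.symm_apply_eq]

lemma apply_notMem_prefixSet (σ : Equiv.Perm (Fin n)) (i : Fin n) : σ i ∉ prefixSet σ i := by
  simp [mem_prefixSet]

lemma prefixSet_mul_swap (σ : Equiv.Perm (Fin n)) {i j : Fin n} (hij : (j : ℕ) = i + 1) {k : ℕ}
    (hk : k ≠ j) : prefixSet (σ * Equiv.swap i j) k = prefixSet σ k := by
  ext a
  rw [mem_prefixSet, mem_prefixSet, Equiv.Perm.mul_def, Equiv.symm_trans_apply, Equiv.symm_swap]
  rcases eq_or_ne (σ.symm a) i with h | h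
  · rw [h, Equiv.swap_apply_left]; omega
  rcases eq_or_ne (σ.symm a) j with h' | h'
  · rw [h', Equiv.swap_apply_right]; omega
  rw [Equiv.swap_apply_of_ne_of_ne h h']

lemma Fin.filter_val_lt_card_eq {P : Finset (Fin n)} (hP : IsLowerSet (P : Set (Fin n))) :
    univ.filter (fun p : Fin n => (p : ℕ) < #P) = P := by
  ext p
  simp only [mem_filter, mem_univ, true_and]
  constructor
  · intro hp
    by_contra hpP
    have : P ⊆ Iio p := fun q hq => mem_Iio.2 <| lt_of_not_ge fun hpq => hpP (hP hpq hq)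
    have := card_le_card this
    rw [Fin.card_Iio] at this
    omega
  · intro hp
    have := card_le_card fun q hq => hP (mem_Iic.1 hq) hp
    rw [Fin.card_Iic] at this
    omega

lemma prefixSet_card_filter_lt {x : Fin n → ℝ} {σ : Equiv.Perm (Fin n)} (hσ : Antitone (x ∘ σ))
    (θ : ℝ) : prefixSet σ #(univ.filter (θ < x ·)) = univ.filter (θ < x ·) := by
  set P := univ.filter fun p => θ < x (σ p)
  have hP : IsLowerSet (P : Set (Fin n)) := fun p q hqp hp => by
    simp only [P, mem_coe, mem_filter, mem_univ, true_and] at hp ⊢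
    exact hp.trans_le (hσ hqp)
  have himage : univ.filter (θ < x ·) = P.image σ := by
    ext a
    simp only [P, mem_filter, mem_univ, true_and, mem_image]
    exact ⟨fun h => ⟨σ.symm a, by simpa, σ.apply_symm_apply a⟩, by rintro ⟨p, hp, rfl⟩; exact hp⟩
  rw [himage, card_image_of_injective _ σ.injective, prefixSet, Fin.filter_val_lt_card_eq hP]

end Prefix

section LovaszSum

variable {n : ℕ} (f : Finset (Fin n) → ℝ)

lemma lovaszSum_smul_add_smul (x y : Fin n → ℝ) (a b : ℝ) (σ : Equiv.Perm (Fin n)) :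
    lovaszSum f (a • x + b • y) σ = a * lovaszSum f x σ + b * lovaszSum f y σ := by
  simp only [lovaszSum, mul_sum, ← sum_add_distrib, Pi.add_apply, Pi.smul_apply, smul_eq_mul]
  exact sum_congr rfl fun _ _ => by ring

lemma lovaszSum_indicator_prefixSet (σ : Equiv.Perm (Fin n)) {k : ℕ} (hk : k ≤ n) :
    lovaszSum f ((prefixSet σ k : Set (Fin n)).indicator 1) σ = f (prefixSet σ k) - f ∅ := by
  set F : ℕ → ℝ := fun m => f (prefixSet σ (min m k))
  have hterm (i : ℕ) : (if i < k then f (prefixSet σ (i + 1)) - f (prefixSet σ i) else 0)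
      = F (i + 1) - F i := by
    rcases lt_or_ge i k with h | h
    · simp only [F, if_pos h, min_eq_left (Nat.succ_le_of_lt h), min_eq_left h.le]
    · simp only [F, if_neg h.not_gt, min_eq_right h, min_eq_right (h.trans i.le_succ), sub_self]
  calc lovaszSum f ((prefixSet σ k : Set (Fin n)).indicator 1) σ
      = ∑ i : Fin n, (F (i + 1) - F i) := by
        refine sum_congr rfl fun i _ => ?_
        simp only [← hterm, Set.indicator_apply, mem_coe, mem_prefixSet, Equiv.symm_apply_apply]
        split_ifs <;> simp
    _ = F n - F 0 := by rw [Fin.sum_univ_eq_sum_range (fun i => F (i + 1) - F i), sum_range_sub]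
    _ = f (prefixSet σ k) - f ∅ := by simp [F, min_eq_right hk]

end LovaszSum

section Exchange

variable {n : ℕ} {f : Finset (Fin n) → ℝ}

theorem Submodular.lovaszSum_le_lovaszSum_mul_swap (hf : Submodular f) (x : Fin n → ℝ)
    (σ : Equiv.Perm (Fin n)) {i j : Fin n} (hij : (j : ℕ) = i + 1) (hx : x (σ i) ≤ x (σ j)) :
    lovaszSum f x σ ≤ lovaszSum f x (σ * Equiv.swap i j) := by
  set τ := σ * Equiv.swap i j
  set S := prefixSet σ i
  have hne : i ≠ j := fun h => by rw [h] at hij; omega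
  have hτi : τ i = σ j := by simp [τ]
  have hτj : τ j = σ i := by simp [τ]
  have hσ₀ : prefixSet σ i = S := rfl
  have hσ₁ : prefixSet σ (i + 1) = insert (σ i) S := prefixSet_succ σ i
  have hσ₁' : prefixSet σ j = insert (σ i) S := by rw [hij, hσ₁]
  have hσ₂ : prefixSet σ (j + 1) = insert (σ i) (insert (σ j) S) := by
    rw [prefixSet_succ, hσ₁', insert_comm]
  have hτ₀ : prefixSet τ i = S := prefixSet_mul_swap σ hij (by omega)
  have hτ₁ : prefixSet τ (i + 1) = insert (σ j) S := by rw [prefixSet_succ, hτ₀, hτi]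
  have hτ₁' : prefixSet τ j = insert (σ j) S := by rw [hij, hτ₁]
  have hτ₂ : prefixSet τ (j + 1) = insert (σ i) (insert (σ j) S) := by
    rw [prefixSet_mul_swap σ hij (by omega), hσ₂]
  have hmarginal : f (insert (σ i) (insert (σ j) S)) - f (insert (σ j) S)
      ≤ f (insert (σ i) S) - f S := by
    refine hf S _ (subset_insert _ _) _ ?_
    simpa [σ.injective.ne hne] using apply_notMem_prefixSet σ i
  refine sum_le_sum_of_eq_off_pair hne (fun q hqi hqj => ?_) ?_
  · have hqi' : (q : ℕ) + 1 ≠ j := by rw [hij]; exact fun h => hqi (Fin.ext (by omega))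
    rw [prefixSet_mul_swap σ hij hqi', prefixSet_mul_swap σ hij (Fin.val_injective.ne hqj),
      Equiv.Perm.mul_apply, Equiv.swap_apply_of_ne_of_ne hqi hqj]
  · rw [hσ₀, hσ₁, hσ₁', hσ₂, hτ₀, hτ₁, hτ₁', hτ₂, hτi, hτj]
    nlinarith [mul_nonneg (sub_nonneg.2 hx) (sub_nonneg.2 hmarginal)]

end Exchange

section BubbleSort

variable {n : ℕ}

def positionWeight (π : Equiv.Perm (Fin n)) : ℕ :=
  ∑ q : Fin n, (n - q) * (π q : ℕ)

lemma positionWeight_mul_swap_lt (π : Equiv.Perm (Fin n)) {i j : Fin n} (hij : (j : ℕ) = i + 1)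
    (hdesc : π j < π i) : positionWeight (π * Equiv.swap i j) < positionWeight π := by
  have hne : i ≠ j := fun h => by rw [h] at hij; omega
  refine sum_lt_sum_of_eq_off_pair hne
    (fun q hqi hqj => by rw [Equiv.Perm.mul_apply, Equiv.swap_apply_of_ne_of_ne hqi hqj]) ?_
  simp only [Equiv.Perm.mul_apply, Equiv.swap_apply_left, Equiv.swap_apply_right]
  rw [Fin.lt_def] at hdesc
  have hweight : n - (i : ℕ) = n - j + 1 := by omega
  rw [hweight]
  nlinarith

lemma exists_descent_of_ne_one {π : Equiv.Perm (Fin n)} (hπ : π ≠ 1) :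
    ∃ i j : Fin n, (j : ℕ) = i + 1 ∧ π j < π i := by
  by_contra! hasc
  refine hπ (Equiv.ext (congrFun ((StrictMono.range_inj ?_ strictMono_id).1 (by simp))))
  cases n with
  | zero => exact fun a => a.elim0
  | succ m =>
    exact Fin.strictMono_iff_lt_succ.2 fun i =>
      (hasc _ _ rfl).lt_of_ne (π.injective.ne Fin.castSucc_lt_succ.ne)

lemma apply_le_apply_one_of_le_mul_swap {α : Type*} [Preorder α] (L : Equiv.Perm (Fin n) → α)
    (hL : ∀ π (i j : Fin n), (j : ℕ) = i + 1 → π j < π i → L π ≤ L (π * Equiv.swap i j))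
    (π : Equiv.Perm (Fin n)) : L π ≤ L 1 := by
  induction h : positionWeight π using Nat.strong_induction_on generalizing π with
  | _ w ih =>
    by_cases hπ : π = 1
    · rw [hπ]
    obtain ⟨i, j, hij, hdesc⟩ := exists_descent_of_ne_one hπ
    exact (hL π i j hij hdesc).trans (ih _ (h ▸ positionWeight_mul_swap_lt π hij hdesc) _ rfl)

end BubbleSort

section Lovasz

variable {n : ℕ} {f : Finset (Fin n) → ℝ}

lemma antitone_comp_sort_neg (x : Fin n → ℝ) : Antitone (x ∘ Tuple.sort fun i => -x i) :=
  fun _ _ hpq => by simpa using Tuple.monotone_sort (fun i => -x i) hpq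

theorem Submodular.lovaszSum_le_lovasz (hf : Submodular f) (x : Fin n → ℝ)
    (τ : Equiv.Perm (Fin n)) : lovaszSum f x τ ≤ lovasz f x := by
  set σ := Tuple.sort fun i => -x i
  have hbubble := apply_le_apply_one_of_le_mul_swap (fun π => lovaszSum f x (σ * π))
    (fun π i j hij hdesc => by
      simpa only [mul_assoc] using hf.lovaszSum_le_lovaszSum_mul_swap x (σ * π) hij
        (antitone_comp_sort_neg x hdesc.le)) (σ⁻¹ * τ)
  exact (by simpa using hbubble : lovaszSum f x τ ≤ lovaszSum f x σ)

theorem Submodular.convexOn_lovasz (hf : Submodular f) : ConvexOn ℝ Set.univ (lovasz f) := by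
  refine ⟨convex_univ, fun x _ y _ a b ha hb _ => ?_⟩
  calc lovasz f (a • x + b • y)
      = a * lovaszSum f x _ + b * lovaszSum f y _ := lovaszSum_smul_add_smul f x y a b _
    _ ≤ a * lovasz f x + b * lovasz f y := by
        gcongr <;> exact hf.lovaszSum_le_lovasz _ _

lemma lovasz_smul_indicator_add_smul_indicator {A C : Finset (Fin n)} (hAC : A ⊆ C) {a b : ℝ}
    (ha : 0 < a) (hb : 0 < b) :
    lovasz f (a • (A : Set (Fin n)).indicator 1 + b • (C : Set (Fin n)).indicator 1)
      = a * (f A - f ∅) + b * (f C - f ∅) := by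
  set x := a • (A : Set (Fin n)).indicator 1 + b • (C : Set (Fin n)).indicator (1 : Fin n → ℝ)
  set σ := Tuple.sort fun i => -x i
  have hx (j : Fin n) : x j = (if j ∈ A then a else 0) + (if j ∈ C then b else 0) := by
    simp [x, Set.indicator_apply]
  have hlevels : univ.filter (b < x ·) = A ∧ univ.filter (0 < x ·) = C := by
    constructor <;> ext j <;> simp only [mem_filter, mem_univ, true_and, hx] <;>
      by_cases hjA : j ∈ A <;> by_cases hjC : j ∈ C <;> simp [hjA, hjC, hb, hb.le] <;>
      first | linarith | exact absurd (hAC hjA) hjC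
  obtain ⟨hA, hC⟩ := hlevels
  have hσA : prefixSet σ #A = A := hA ▸ prefixSet_card_filter_lt (antitone_comp_sort_neg x) b
  have hσC : prefixSet σ #C = C := hC ▸ prefixSet_card_filter_lt (antitone_comp_sort_neg x) 0
  have hcard (S : Finset (Fin n)) : #S ≤ n := (card_le_univ S).trans_eq (Fintype.card_fin n)
  have hindA := hσA ▸ lovaszSum_indicator_prefixSet f σ (hcard A)
  have hindC := hσC ▸ lovaszSum_indicator_prefixSet f σ (hcard C)
  change lovaszSum f x σ = _
  rw [lovaszSum_smul_add_smul, hindA, hindC]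

lemma lovasz_indicator (S : Finset (Fin n)) :
    lovasz f ((S : Set (Fin n)).indicator 1) = f S - f ∅ := by
  have h := lovasz_smul_indicator_add_smul_indicator (f := f) (subset_refl S)
    (one_half_pos (α := ℝ)) one_half_pos
  rw [← add_smul, add_halves, one_smul] at h
  rw [h]
  ring

end Lovasz

lemma indicator_one_mem_Icc {ι : Type*} (S : Set ι) : S.indicator 1 ∈ Set.Icc (0 : ι → ℝ) 1 :=
  ⟨fun _ => Set.indicator_nonneg (fun _ _ => zero_le_one) _,
    fun _ => Set.indicator_le_self' (fun _ _ => zero_le_one) _⟩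

theorem submodular_iff_lovasz_convexOn_general {n : ℕ} (f : Finset (Fin n) → ℝ) :
    Submodular f ↔ ConvexOn ℝ (Set.Icc (0 : Fin n → ℝ) 1) (lovasz f) := by
  refine ⟨fun hf => hf.convexOn_lovasz.subset (Set.subset_univ _) (convex_Icc 0 1),
    fun hconv A B hAB i hiB => ?_⟩
  have hiA : i ∉ A := fun h => hiB (hAB h)
  let ind (S : Finset (Fin n)) : Fin n → ℝ := (S : Set (Fin n)).indicator 1
  have hmid : (1 / 2 : ℝ) • ind (insert i A) + (1 / 2 : ℝ) • ind B
      = (1 / 2 : ℝ) • ind A + (1 / 2 : ℝ) • ind (insert i B) := by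
    ext j
    by_cases hji : j = i
    · subst hji
      simp [ind, hiA, hiB]
    by_cases hjA : j ∈ A
    · simp [ind, hji, hjA, hAB hjA]
    · by_cases hjB : j ∈ B <;> simp [ind, hji, hjA, hjB]
  have hjensen := hconv.2 (indicator_one_mem_Icc ↑(insert i A)) (indicator_one_mem_Icc ↑B)
    (by norm_num : (0 : ℝ) ≤ 1 / 2) (by norm_num : (0 : ℝ) ≤ 1 / 2) (by norm_num)
  rw [hmid, lovasz_smul_indicator_add_smul_indicator ((subset_insert i B).trans' hAB)
    one_half_pos one_half_pos, lovasz_indicator, lovasz_indicator, smul_eq_mul, smul_eq_mul]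
    at hjensen
  linarith

/-- A set function with `f(∅) = 0` is submodular iff its Lovász extension is convex
on `[0,1]^n`. -/
theorem submodular_iff_lovasz_convexOn {n : ℕ} (f : Finset (Fin n) → ℝ) (h0 : f ∅ = 0) :
    Submodular f ↔ ConvexOn ℝ (Set.Icc (0 : Fin n → ℝ) 1) (lovasz f) :=
  submodular_iff_lovasz_convexOn_general f
end

section
/- OSPGD dynamic α-regret bound: Let f̂_t : [0,1]^n → ℝ be convex (Lovász extensions of submodular f_t), x_t generated by x_{t+1} = Proj_{conv(𝒮)}(x_t − η g_t) with g_t ∈ ∂f̂_t(x_t), ‖g_t‖₂ ≤ G, and comparators u_t = χ_{S*_t} ∈ conv(𝒮) ⊆ [0,1]^n with ‖x_t‖₂ ≤ √n, ‖u_t‖₂ ≤ √n. Then Σ_{t=1}^T ( f̂_t(x_t) − f̂_t(u_t) ) ≤ (5n)/(2η) + (η/2) G² T + (√n/η) Σ_{t=2}^T ‖u_t − u_{t−1}‖₂. -/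
open scoped RealInnerProductSpace

open Finset in
private lemma tele_sum (h : ℕ → ℝ) (T : ℕ) :
    ∑ t ∈ Icc 1 T, (h t - h (t + 1)) = h 1 - h (T + 1) := by
  induction T with
  | zero => simp
  | succ T ih =>
    rw [Finset.sum_Icc_succ_top (by omega : 1 ≤ T + 1), ih]
    ring

open Finset in
private lemma abel_sum (b c : ℕ → ℝ) {T : ℕ} (hT : 1 ≤ T) :
    ∑ t ∈ Icc 1 T, (c t - b t) = c T - b 1 - ∑ t ∈ Icc 2 T, (b t - c (t - 1)) := by
  induction T, hT using Nat.le_induction with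
  | base => simp
  | succ T hT ih =>
    rw [Finset.sum_Icc_succ_top (by omega : 1 ≤ T + 1), ih,
      Finset.sum_Icc_succ_top (by omega : 2 ≤ T + 1)]
    simp only [Nat.add_sub_cancel]
    ring

private lemma proj_nonexpansive {E : Type*} [NormedAddCommGroup E] [InnerProductSpace ℝ E]
    {C : Set E} (hC : Convex ℝ C) {p z u : E} (hp : p ∈ C) (hu : u ∈ C)
    (hmin : ∀ y ∈ C, ‖p - z‖ ≤ ‖y - z‖) : ‖p - u‖ ≤ ‖z - u‖ := by
  haveI : Nonempty C := ⟨⟨p, hp⟩⟩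
  have hinf : ‖z - p‖ = ⨅ w : C, ‖z - w‖ := by
    apply le_antisymm
    · exact le_ciInf fun w => by simpa [norm_sub_rev] using hmin w w.2
    · have hbdd : BddBelow (Set.range fun w : C => ‖z - (w : E)‖) :=
        ⟨0, by rintro _ ⟨w, rfl⟩; exact norm_nonneg _⟩
      simpa using ciInf_le hbdd (⟨p, hp⟩ : C)
  have key : ⟪z - p, u - p⟫ ≤ 0 :=
    (norm_eq_iInf_iff_real_inner_le_zero hC hp).mp hinf u hu
  have hexp : ‖z - u‖ ^ 2 = ‖z - p‖ ^ 2 - 2 * ⟪z - p, u - p⟫ + ‖u - p‖ ^ 2 := by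
    have : z - u = (z - p) - (u - p) := by abel
    rw [this, norm_sub_sq_real]
  have h2 : ‖p - u‖ ^ 2 ≤ ‖z - u‖ ^ 2 := by
    rw [norm_sub_rev p u]
    nlinarith [sq_nonneg ‖z - p‖]
  exact (pow_le_pow_iff_left₀ (norm_nonneg _) (norm_nonneg _) two_ne_zero).mp h2


/-- OSPGD dynamic regret bound against moving comparators: for convex losses `f̂_t`,
projected subgradient iterates `x_{t+1} = Proj_{conv 𝒮}(x_t − η g_t)` with `‖g_t‖ ≤ G`,
and comparators `u_t ∈ conv 𝒮` with `‖x_t‖, ‖u_t‖ ≤ √n`,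
`Σ_t (f̂_t(x_t) − f̂_t(u_t)) ≤ 5n/(2η) + (η/2)G²T + (√n/η) Σ_{t=2}^T ‖u_t − u_{t−1}‖`. -/
theorem ospgd_dynamic_regret_bound {n : ℕ} (T : ℕ)
    (C : Set (EuclideanSpace ℝ (Fin n))) (hCclosed : IsClosed C) (hCconvex : Convex ℝ C)
    (fhat : ℕ → EuclideanSpace ℝ (Fin n) → ℝ)
    (hconv : ∀ t ∈ Finset.Icc 1 T, ConvexOn ℝ C (fhat t))
    (x g u : ℕ → EuclideanSpace ℝ (Fin n))
    (η G : ℝ) (hη : 0 < η)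
    (hxmem : ∀ t, x t ∈ C) (humem : ∀ t, u t ∈ C)
    (hxnorm : ∀ t, ‖x t‖ ≤ Real.sqrt n) (hunorm : ∀ t, ‖u t‖ ≤ Real.sqrt n)
    (hG : ∀ t ∈ Finset.Icc 1 T, ‖g t‖ ≤ G)
    -- g_t is a subgradient of f̂_t at x_t
    (hsub : ∀ t ∈ Finset.Icc 1 T, ∀ y ∈ C, fhat t (x t) + ⟪g t, y - x t⟫ ≤ fhat t y)
    -- x_{t+1} is the Euclidean projection of x_t − η g_t onto C
    (hproj : ∀ t ∈ Finset.Icc 1 T, ∀ y ∈ C,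
      ‖x (t + 1) - (x t - η • g t)‖ ≤ ‖y - (x t - η • g t)‖) :
    ∑ t ∈ Finset.Icc 1 T, (fhat t (x t) - fhat t (u t)) ≤
      5 * n / (2 * η) + (η / 2) * G ^ 2 * T +
        (Real.sqrt n / η) * ∑ t ∈ Finset.Icc 2 T, ‖u t - u (t - 1)‖ := by
  rcases Nat.eq_zero_or_pos T with rfl | hT1
  · simp only [show Finset.Icc 1 0 = ∅ from rfl, show Finset.Icc 2 0 = ∅ from rfl,
      Finset.sum_empty, Nat.cast_zero, mul_zero, add_zero]
    positivity
  have hs : Real.sqrt n * Real.sqrt n = n := Real.mul_self_sqrt (Nat.cast_nonneg n)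
  have hsnn : (0:ℝ) ≤ Real.sqrt n := Real.sqrt_nonneg n
  -- per-step bound
  have key : ∀ t ∈ Finset.Icc 1 T, fhat t (x t) - fhat t (u t) ≤
      (‖x t - u t‖^2 - ‖x (t+1) - u t‖^2) / (2*η) + (η/2) * G^2 := by
    intro t ht
    have h1 := hsub t ht (u t) (humem t)
    have hproj' : ‖x (t+1) - u t‖ ≤ ‖(x t - η • g t) - u t‖ := by
      have := proj_nonexpansive hCconvex (hxmem (t+1)) (humem t) (hproj t ht)
      exact this
    have h2 : ‖x (t+1) - u t‖^2 ≤ ‖(x t - η • g t) - u t‖^2 :=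
      pow_le_pow_left₀ (norm_nonneg _) hproj' 2
    have hexp : ‖(x t - η • g t) - u t‖^2
        = ‖x t - u t‖^2 - 2 * (η * ⟪x t - u t, g t⟫) + η^2 * ‖g t‖^2 := by
      have e : (x t - η • g t) - u t = (x t - u t) - η • g t := by abel
      rw [e, norm_sub_sq_real, real_inner_smul_right, norm_smul, Real.norm_eq_abs,
        abs_of_pos hη, mul_pow]
    have hinner : ⟪g t, u t - x t⟫ = - ⟪x t - u t, g t⟫ := by
      rw [real_inner_comm, ← inner_neg_left, neg_sub]
    have hgn : ‖g t‖^2 ≤ G^2 := pow_le_pow_left₀ (norm_nonneg _) (hG t ht) 2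
    rw [hinner] at h1
    have h3 : fhat t (x t) - fhat t (u t) ≤ ⟪x t - u t, g t⟫ := by linarith
    have h4 : 2*η*(fhat t (x t) - fhat t (u t)) ≤
        ‖x t - u t‖^2 - ‖x (t+1) - u t‖^2 + η^2*G^2 := by
      nlinarith [mul_le_mul_of_nonneg_left h3 (by positivity : (0:ℝ) ≤ 2*η),
        mul_le_mul_of_nonneg_left hgn (sq_nonneg η)]
    have h2η : (0:ℝ) < 2*η := by positivity
    calc fhat t (x t) - fhat t (u t)
        = (2*η*(fhat t (x t) - fhat t (u t)))/(2*η) := by field_simp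
      _ ≤ (‖x t - u t‖^2 - ‖x (t+1) - u t‖^2 + η^2*G^2)/(2*η) := by
          gcongr
      _ = (‖x t - u t‖^2 - ‖x (t+1) - u t‖^2)/(2*η) + (η/2)*G^2 := by
          field_simp
  set S2 := ∑ t ∈ Finset.Icc 2 T, ‖u t - u (t-1)‖ with hS2def
  have hS2nn : 0 ≤ S2 := Finset.sum_nonneg fun _ _ => norm_nonneg _
  have hdiff : ∀ t : ℕ, ‖x t - u t‖^2 - ‖x (t+1) - u t‖^2
      = (‖x t‖^2 - ‖x (t+1)‖^2) +
        2*((fun t => ⟪x (t+1), u t⟫) t - (fun t => ⟪x t, u t⟫) t) := by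
    intro t
    simp only
    rw [norm_sub_sq_real, norm_sub_sq_real]
    ring
  have hxsq : ∀ t, ‖x t‖^2 ≤ (n:ℝ) := by
    intro t
    calc ‖x t‖^2 ≤ Real.sqrt n ^ 2 := pow_le_pow_left₀ (norm_nonneg _) (hxnorm t) 2
      _ = (n:ℝ) := Real.sq_sqrt (Nat.cast_nonneg n)
  have hin : ∀ s t : ℕ, |⟪x s, u t⟫| ≤ (n:ℝ) := by
    intro s t
    calc |⟪x s, u t⟫| ≤ ‖x s‖ * ‖u t‖ := abs_real_inner_le_norm _ _
      _ ≤ Real.sqrt n * Real.sqrt n :=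
          mul_le_mul (hxnorm s) (hunorm t) (norm_nonneg _) hsnn
      _ = (n:ℝ) := hs
  have hsum : ∑ t ∈ Finset.Icc 1 T, (‖x t - u t‖^2 - ‖x (t+1) - u t‖^2)
      ≤ 5*(n:ℝ) + 2*Real.sqrt n * S2 := by
    have e1 : ∑ t ∈ Finset.Icc 1 T, (‖x t - u t‖^2 - ‖x (t+1) - u t‖^2)
        = ∑ t ∈ Finset.Icc 1 T, ((‖x t‖^2 - ‖x (t+1)‖^2) +
          2*((fun t => ⟪x (t+1), u t⟫) t - (fun t => ⟪x t, u t⟫) t)) :=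
      Finset.sum_congr rfl fun t _ => hdiff t
    rw [e1, Finset.sum_add_distrib, ← Finset.mul_sum,
      tele_sum (fun t => ‖x t‖^2) T,
      abel_sum (fun t => ⟪x t, u t⟫) (fun t => ⟪x (t+1), u t⟫) hT1]
    have hterm : ∀ t ∈ Finset.Icc 2 T,
        -(Real.sqrt n * ‖u t - u (t-1)‖) ≤ ⟪x t, u t⟫ - ⟪x (t-1+1), u (t-1)⟫ := by
      intro t ht
      have ht' : t - 1 + 1 = t := by
        have := (Finset.mem_Icc.mp ht).1; omega
      rw [ht']
      have h1 : |⟪x t, u t - u (t-1)⟫| ≤ Real.sqrt n * ‖u t - u (t-1)‖ :=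
        (abs_real_inner_le_norm _ _).trans
          (mul_le_mul_of_nonneg_right (hxnorm t) (norm_nonneg _))
      rw [inner_sub_right] at h1
      have := (abs_le.mp h1).1
      linarith
    have hSb : -(Real.sqrt n * S2) ≤
        ∑ t ∈ Finset.Icc 2 T, (⟪x t, u t⟫ - ⟪x (t-1+1), u (t-1)⟫) := by
      rw [hS2def, Finset.mul_sum, ← Finset.sum_neg_distrib]
      exact Finset.sum_le_sum hterm
    have h1 := hxsq 1
    have h2 := sq_nonneg ‖x (T+1)‖
    have h3 := (abs_le.mp (hin (T+1) T)).2
    have h4 := (abs_le.mp (hin 1 1)).1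
    linarith
  calc ∑ t ∈ Finset.Icc 1 T, (fhat t (x t) - fhat t (u t))
      ≤ ∑ t ∈ Finset.Icc 1 T,
        ((‖x t - u t‖^2 - ‖x (t+1) - u t‖^2) / (2*η) + (η/2) * G^2) :=
        Finset.sum_le_sum key
    _ = (∑ t ∈ Finset.Icc 1 T, (‖x t - u t‖^2 - ‖x (t+1) - u t‖^2)) / (2*η)
        + (η/2) * G^2 * T := by
        rw [Finset.sum_add_distrib, ← Finset.sum_div, Finset.sum_const, Nat.card_Icc]
        simp only [nsmul_eq_mul]
        have : (T + 1 - 1 : ℕ) = T := by omega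
        rw [this]
        ring
    _ ≤ (5*(n:ℝ) + 2*Real.sqrt n * S2) / (2*η) + (η/2) * G^2 * T := by gcongr
    _ = 5 * n / (2 * η) + (η / 2) * G ^ 2 * T + (Real.sqrt n / η) * S2 := by
        field_simp
        ring
end
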